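/- arXiv:2108.08798 — 3 statements merged into one kernel-verified Lean document; each statement's English description precedes it below -/
import Mathlib

section
/- Let F_q be a finite field and let α_1, ..., α_{L+T} be distinct elements of F_q. Let f_i(x) = Π_{m ≠ i, 1 ≤ m ≤ L+T} (x - α_m)/(α_i - α_m) be the Lagrange basis polynomials. Then for any T distinct evaluation points β_1, ..., β_T ∈ F_q \ {α_1, ..., α_{L+T}}, the T × T matrix M with entries M_{i,j} = f_{L+i}(β_j) is invertible. -/
/-!
Row `i` of the matrix is the Lagrange basis polynomial of node `α (L + i)` evaluated at the `β j`.
If `w` is a vector with `w ᵥ* M = 0`, the interpolant of the values `(0, …, 0, w)` at the nodes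
`α` vanishes at the `L` nodes `α m`, `m < L`, and at the `T` points `β j`. These `L + T` points
are distinct while the interpolant has degree `< L + T`, so it is zero, and so is `w`.
-/

open Polynomial Finset

namespace Lagrange

variable {F ι : Type*} [Field F] [DecidableEq ι]

theorem eq_zero_of_eval_interpolate_eq_zero {s : Finset ι} {v : ι → F} (hvs : Set.InjOn v s)
    {r : ι → F} {u : Finset F} (hu : #s ≤ #u) (h : ∀ x ∈ u, (interpolate s v r).eval x = 0)
    {i : ι} (hi : i ∈ s) : r i = 0 := by
  have hzero : interpolate s v r = 0 :=
    eq_zero_of_degree_lt_of_eval_finset_eq_zero u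
      ((degree_interpolate_lt r hvs).trans_le (by exact_mod_cast hu)) h
  rw [← eval_interpolate_at_node r hvs hi, hzero, eval_zero]

theorem interpolate_append_zero {L T : ℕ} (α : Fin (L + T) → F) (w : Fin T → F) :
    interpolate univ α (Fin.append 0 w) =
      ∑ i, C (w i) * Lagrange.basis univ α (Fin.natAdd L i) := by
  simp [interpolate_apply, Fin.sum_univ_add]

end Lagrange

open Lagrange in
theorem stmt_8_general (F : Type*) [Field F] (L T : ℕ)
    (α : Fin (L + T) → F) (hα : Function.Injective α)
    (β : Fin T → F) (hβ : Function.Injective β)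
    (hout : ∀ j, β j ∉ Set.range α) :
    (Matrix.of fun (i j : Fin T) =>
      Polynomial.eval (β j) (∏ m ∈ Finset.univ.erase (Fin.natAdd L i),
        Polynomial.C ((α (Fin.natAdd L i) - α m)⁻¹)
          * (Polynomial.X - Polynomial.C (α m)))).det ≠ 0 := by
  classical
  rw [Ne, ← Matrix.exists_vecMul_eq_zero_iff]
  rintro ⟨w, hw0, hw⟩
  apply hw0
  funext i
  set γ : Fin (L + T) → F := Fin.append (α ∘ Fin.castAdd T) β with hγ_def
  have hγ : Function.Injective γ :=
    Fin.append_injective_iff.mpr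
      ⟨hα.comp (Fin.castAdd_injective L T), hβ, fun m j h => hout j ⟨_, h⟩⟩
  have hvanish : ∀ x ∈ univ.image γ, (interpolate univ α (Fin.append 0 w)).eval x = 0 := by
    simp only [mem_image, mem_univ, true_and, forall_exists_index, forall_apply_eq_imp_iff]
    refine Fin.addCases (fun m => ?_) (fun j => ?_)
    · rw [hγ_def, Fin.append_left, Function.comp_apply,
        eval_interpolate_at_node _ hα.injOn (mem_univ _), Fin.append_left, Pi.zero_apply]
    · have hcol : ∑ i, w i * eval (β j) (Lagrange.basis univ α (Fin.natAdd L i)) = 0 :=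
        congrFun hw j
      rw [hγ_def, Fin.append_right, interpolate_append_zero, eval_finsetSum, ← hcol]
      simp only [eval_mul, eval_C]
  simpa only [Fin.append_right, Pi.zero_apply] using eq_zero_of_eval_interpolate_eq_zero hα.injOn
    (by rw [card_image_of_injective _ hγ]) hvanish (mem_univ (Fin.natAdd L i))

theorem stmt_8 (F : Type*) [Field F] [Fintype F] (L T : ℕ)
    (α : Fin (L + T) → F) (hα : Function.Injective α)
    (β : Fin T → F) (hβ : Function.Injective β)
    (hout : ∀ j, β j ∉ Set.range α) :
    (Matrix.of fun (i j : Fin T) =>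
      Polynomial.eval (β j) (∏ m ∈ Finset.univ.erase (Fin.natAdd L i),
        Polynomial.C ((α (Fin.natAdd L i) - α m)⁻¹)
          * (Polynomial.X - Polynomial.C (α m)))).det ≠ 0 :=
  stmt_8_general F L T α hα β hβ hout
end

section
/- In the field F_16 = F_2(α) with α^4 + α + 1 = 0, for any polynomial h(x) = h_0 + h_1 x + h_2 x^2 over F_16, the following identity holds: α^4·(Tr(α^{-1} h(0)) + Tr(α^{-2} h(α^5)) + Tr(α^{-8} h(α^{10})) + Tr(α^{-4} h(α^{15}))) + α^5·Tr(α^{-2} h(α^5)) + α^{10}·Tr(α^{-8} h(α^{10})) + α^{15}·Tr(α^{-4} h(α^{15})) = h(α), where Tr: F_16 → F_4 is Tr(x) = x + x^4. -/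
/-!
The four evaluation points `0, α⁵, α¹⁰, α¹⁵ = 1` are the elements `a` of `𝔽₄`, the coefficients
`α⁻¹, α⁻², α⁻⁸, α⁻⁴` are the inverses `(α + a)⁻¹`, and the weights `α⁴ + a` equal `(α + a)⁴`
because `a⁴ = a`. Hence each weighted trace `(α + a)⁴ Tr (h(a) / (α + a))` is
`(α + a)³ h(a) + h(a)⁴`. Summed over `𝔽₄`, the fourth powers give `(∑ h(a))⁴ = 0`, and
`∑ (α + a)³ h(a) = h(α)` for every `h` of degree at most `2`, since the power sums `∑ aᵐ` over
`𝔽₄` vanish for `m ≤ 5` except at `m = 3`.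
-/

section CharTwo

variable {R : Type*} [CommRing R]

theorem add_pow_four_of_two_eq_zero (h2 : (2 : R) = 0) (x y : R) :
    (x + y) ^ 4 = x ^ 4 + y ^ 4 := by
  linear_combination (2 * x ^ 3 * y + 3 * x ^ 2 * y ^ 2 + 2 * x * y ^ 3) * h2

theorem pow_four_add_mul_trace (h2 : (2 : R) = 0) {α a u : R} (ha : a ^ 4 = a)
    (hu : u * (α + a) = 1) (y : R) :
    (α ^ 4 + a) * (u * y + (u * y) ^ 4) = (α + a) ^ 3 * y + y ^ 4 := by
  have hweight : α ^ 4 + a = (α + a) ^ 4 := by rw [add_pow_four_of_two_eq_zero h2, ha]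
  rw [hweight]
  linear_combination
    ((α + a) ^ 3 * y + y ^ 4 * ((u * (α + a)) ^ 3 + (u * (α + a)) ^ 2 + u * (α + a) + 1)) * hu

variable (h2 : (2 : R) = 0) {β : R} (hβ : β ^ 2 + β + 1 = 0)
  (h : R → R) {c₀ c₁ c₂ : R} (hh : ∀ x, h x = c₀ + c₁ * x + c₂ * x ^ 2)
include h2 hβ hh

theorem sum_cube_mul_eval_eq (α : R) :
    α ^ 3 * h 0 + (α + β) ^ 3 * h β + (α + β ^ 2) ^ 3 * h (β ^ 2) + (α + 1) ^ 3 * h 1 = h α := by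
  simp only [hh]
  grind

theorem sum_eval_pow_four_eq_zero :
    h 0 ^ 4 + h β ^ 4 + h (β ^ 2) ^ 4 + h 1 ^ 4 = 0 := by
  have hsum : h 0 + h β + h (β ^ 2) + h 1 = 0 := by
    simp only [hh]
    grind
  simp only [← add_pow_four_of_two_eq_zero h2, hsum]
  ring

theorem sum_weighted_trace_eq_eval (tr : R → R) (htr : ∀ x, tr x = x + x ^ 4)
    {α u₀ u₁ u₂ u₃ : R} (hu₀ : u₀ * α = 1) (hu₁ : u₁ * (α + β) = 1)
    (hu₂ : u₂ * (α + β ^ 2) = 1) (hu₃ : u₃ * (α + 1) = 1) :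
    α ^ 4 * tr (u₀ * h 0) + (α ^ 4 + β) * tr (u₁ * h β)
      + (α ^ 4 + β ^ 2) * tr (u₂ * h (β ^ 2)) + (α ^ 4 + 1) * tr (u₃ * h 1) = h α := by
  have hβ4 : β ^ 4 = β := by linear_combination (β ^ 2 - β) * hβ
  have hβ8 : (β ^ 2) ^ 4 = β ^ 2 := by linear_combination β ^ 2 * (β - 1) * (β ^ 3 + 1) * hβ
  simp only [htr]
  linear_combination
    pow_four_add_mul_trace h2 (a := 0) (by ring) (by simpa using hu₀) (h 0)
      + pow_four_add_mul_trace h2 hβ4 hu₁ (h β)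
      + pow_four_add_mul_trace h2 hβ8 hu₂ (h (β ^ 2))
      + pow_four_add_mul_trace h2 (one_pow 4) hu₃ (h 1)
      + sum_cube_mul_eval_eq h2 hβ h hh α + sum_eval_pow_four_eq_zero h2 hβ h hh

end CharTwo

theorem stmt_9 (K : Type*) [Field K] (hchar : (2 : K) = 0)
    (α : K) (hα : α ^ 4 + α + 1 = 0) (h0 h1 h2 : K) :
    let tr : K → K := fun x => x + x ^ 4
    let h : K → K := fun x => h0 + h1 * x + h2 * x ^ 2
    α ^ 4 * (tr (α⁻¹ ^ 1 * h 0) + tr (α⁻¹ ^ 2 * h (α ^ 5))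
        + tr (α⁻¹ ^ 8 * h (α ^ 10)) + tr (α⁻¹ ^ 4 * h (α ^ 15)))
      + α ^ 5 * tr (α⁻¹ ^ 2 * h (α ^ 5))
      + α ^ 10 * tr (α⁻¹ ^ 8 * h (α ^ 10))
      + α ^ 15 * tr (α⁻¹ ^ 4 * h (α ^ 15)) = h α := by
  intro tr h
  have hα0 : α ≠ 0 := by
    rintro rfl
    norm_num at hα
  have hβ : (α ^ 5) ^ 2 + α ^ 5 + 1 = 0 := by grind
  have h15 : α ^ 15 = 1 := by linear_combination (α ^ 5 - 1) * hβ
  have hinv (k : ℕ) {x : K} (hx : x = α ^ k) : α⁻¹ ^ k * x = 1 := by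
    rw [hx, inv_pow, inv_mul_cancel₀ (pow_ne_zero k hα0)]
  have key := sum_weighted_trace_eq_eval hchar hβ h (fun _ => rfl) tr (fun _ => rfl)
    (hinv 1 (pow_one α).symm) (hinv 2 (by grind)) (hinv 8 (by grind)) (hinv 4 (by grind))
  rw [show α ^ 10 = (α ^ 5) ^ 2 by ring, h15]
  linear_combination key
end

section
/- Let F_q be a finite field with q ≥ L + T elements, α_1, ..., α_{L+T} distinct elements of F_q, and A_1, ..., A_L ∈ F_q fixed. Let R_1, ..., R_T be independent uniformly random elements of F_q, and let f be the unique polynomial of degree < L+T with f(α_i) = A_i for i ≤ L and f(α_{L+j}) = R_j for j ≤ T. Then for any T distinct points β_1, ..., β_T ∈ F_q \ {α_1, ..., α_{L+T}}, the random vector (f(β_1), ..., f(β_T)) is uniformly distributed on F_q^T, independently of (A_1, ..., A_L). -/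
/-!
Fix `A` and suppose two choices `R`, `R'` of the random values give interpolants `p`, `p'` with
the same values at every `β j`. Both polynomials have degree `< L + T` and agree at the `L + T`
distinct points `α 1, …, α L, β 1, …, β T`, so `p = p'`; evaluating at the remaining nodes
`α (L + j)` gives `R = R'`. An injective self-map of the finite set `F^T` is a bijection.
-/

open Polynomial

namespace Lagrange

variable {F : Type*} [Field F] {L T : ℕ} {α : Fin (L + T) → F}

theorem eval_interpolate_append_castAdd (hα : Function.Injective α) (A : Fin L → F)
    (R : Fin T → F) (i : Fin L) :
    (interpolate Finset.univ α (Fin.append A R)).eval (α (Fin.castAdd T i)) = A i := by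
  rw [eval_interpolate_at_node _ hα.injOn (Finset.mem_univ _), Fin.append_left]

theorem eval_interpolate_append_natAdd (hα : Function.Injective α) (A : Fin L → F)
    (R : Fin T → F) (j : Fin T) :
    (interpolate Finset.univ α (Fin.append A R)).eval (α (Fin.natAdd L j)) = R j := by
  rw [eval_interpolate_at_node _ hα.injOn (Finset.mem_univ _), Fin.append_right]

theorem injective_eval_interpolate_append (hα : Function.Injective α)
    {β : Fin T → F} (hβ : Function.Injective β) (hout : ∀ j, β j ∉ Set.range α)
    (A : Fin L → F) :
    Function.Injective (fun R : Fin T → F => fun j : Fin T =>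
      (interpolate Finset.univ α (Fin.append A R)).eval (β j)) := by
  intro R R' hR
  have hnodes : Function.Injective (Fin.append (α ∘ Fin.castAdd T) β) :=
    Fin.append_injective_iff.mpr
      ⟨hα.comp (Fin.castAdd_injective L T), hβ, fun i j hij => hout j ⟨_, hij⟩⟩
  have hinterp : interpolate Finset.univ α (Fin.append A R) =
      interpolate Finset.univ α (Fin.append A R') := by
    refine eq_of_degrees_lt_of_eval_index_eq _ hnodes.injOn (degree_interpolate_lt _ hα.injOn)
      (degree_interpolate_lt _ hα.injOn) fun i _ => ?_
    induction i using Fin.addCases with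
    | left i =>
      simp only [Fin.append_left, Function.comp_apply, eval_interpolate_append_castAdd hα]
    | right j => simpa only [Fin.append_right] using congrFun hR j
  funext j
  rw [← eval_interpolate_append_natAdd hα A R, hinterp, eval_interpolate_append_natAdd hα]

end Lagrange

theorem stmt_15_general (F : Type*) [Field F] [Fintype F] (L T : ℕ)
    (α : Fin (L + T) → F) (hα : Function.Injective α)
    (β : Fin T → F) (hβ : Function.Injective β)
    (hout : ∀ j, β j ∉ Set.range α) (A : Fin L → F) :
    Function.Bijective (fun R : Fin T → F => fun j : Fin T =>
      (Lagrange.interpolate Finset.univ α (Fin.append A R)).eval (β j)) :=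
  Finite.injective_iff_bijective.mp (Lagrange.injective_eval_interpolate_append hα hβ hout A)

theorem stmt_15 (F : Type*) [Field F] [Fintype F] (L T : ℕ)
    (hcard : L + T ≤ Fintype.card F)
    (α : Fin (L + T) → F) (hα : Function.Injective α)
    (β : Fin T → F) (hβ : Function.Injective β)
    (hout : ∀ j, β j ∉ Set.range α) (A : Fin L → F) :
    Function.Bijective (fun R : Fin T → F => fun j : Fin T =>
      (Lagrange.interpolate Finset.univ α (Fin.append A R)).eval (β j)) :=
  stmt_15_general F L T α hα β hβ hout A
end
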